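/- Let X = USVᵀ be the SVD of X ∈ ℝ^{n×m}, p = min(m,n), and suppose λ < s_r (the r-th singular value). Let W be an r×r diagonal matrix with entries in {−1, 1}, and set A* = U(S−λI)⁺ᐟ²·N·I_{p×r}W and B* = V(S−λI)⁺ᐟ²·N·I_{p×r} where the products are arranged so that A*B*ᵀ = U(S−λI)⁺I_{p×r}W I_{r×p}Vᵀ. Then ‖X − A*B*ᵀ‖_F² = Σ_{i=1}^{r} (s_i − w_i(s_i − λ))² + Σ_{i=r+1}^{p} s_i², and this quantity is minimized over all sign matrices W exactly when W = I. -/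
import Mathlib

open Matrix

/-- The squared Frobenius norm of a real matrix. -/
def frobSq {n m : ℕ} (M : Matrix (Fin n) (Fin m) ℝ) : ℝ :=
  ∑ i, ∑ j, (M i j) ^ 2

lemma frobSq_eq_trace {n m : ℕ} (M : Matrix (Fin n) (Fin m) ℝ) :
    frobSq M = Matrix.trace (Mᵀ * M) := by
  simp only [frobSq, Matrix.trace, Matrix.diag, Matrix.mul_apply, Matrix.transpose_apply, sq]
  rw [Finset.sum_comm]

lemma frobSq_conj {n m : ℕ} (U : Matrix (Fin n) (Fin n) ℝ) (V : Matrix (Fin m) (Fin m) ℝ)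
    (M : Matrix (Fin n) (Fin m) ℝ) (hU : Uᵀ * U = 1) (hV : Vᵀ * V = 1) :
    frobSq (U * M * Vᵀ) = frobSq M := by
  rw [frobSq_eq_trace, frobSq_eq_trace]
  have h1 : (U * M * Vᵀ)ᵀ * (U * M * Vᵀ) = V * (Mᵀ * M) * Vᵀ := by
    calc (U * M * Vᵀ)ᵀ * (U * M * Vᵀ) = V * (Mᵀ * ((Uᵀ * U) * (M * Vᵀ))) := by
          simp [Matrix.transpose_mul, Matrix.mul_assoc]
      _ = V * (Mᵀ * M) * Vᵀ := by rw [hU]; simp [Matrix.mul_assoc]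
  rw [h1, Matrix.trace_mul_cycle, ← Matrix.mul_assoc, hV, Matrix.one_mul]

/-- Let `X = USVᵀ` be the SVD of `X ∈ ℝ^{n×m}` with singular values
`s₁ ≥ ... ≥ s_p > 0`, `p = min(m,n)`, `r ≤ p`, and `0 < λ < s_r`. Let `W` be a
diagonal `r×r` sign matrix with entries `w_i ∈ {−1,1}`, and
`A*B*ᵀ = U (S−λI)⁺ I_{p×r} W I_{r×p} Vᵀ` (whose nonzero entries are
`w_i·max(0, s_i−λ)` on the first `r` diagonal positions). Then
`‖X − A*B*ᵀ‖_F² = Σ_{i=1}^{r} (s_i − w_i(s_i − λ))² + Σ_{i=r+1}^{p} s_i²`,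
and this quantity is minimized over all sign matrices `W` exactly when `W = I`. -/
theorem sign_matrix_cost (n m p r : ℕ) (hp : p = min m n) (hr : 0 < r) (hrp : r ≤ p)
    (lam : ℝ) (sv : ℕ → ℝ) (hlam : 0 < lam) (hlam' : lam < sv (r - 1))
    (hs_pos : ∀ i, i < p → 0 < sv i)
    (hs_mono : ∀ i j, i ≤ j → j < p → sv j ≤ sv i)
    (X : Matrix (Fin n) (Fin m) ℝ)
    (U : Matrix (Fin n) (Fin n) ℝ) (V : Matrix (Fin m) (Fin m) ℝ)
    (S : Matrix (Fin n) (Fin m) ℝ)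
    (hU : Uᵀ * U = 1) (hU' : U * Uᵀ = 1) (hV : Vᵀ * V = 1) (hV' : V * Vᵀ = 1)
    (hS : ∀ i j, S i j = if (i : ℕ) = (j : ℕ) then sv (i : ℕ) else 0)
    (hX : X = U * S * Vᵀ)
    (w : ℕ → ℝ) (hw : ∀ i, i < r → w i = 1 ∨ w i = -1)
    -- the limiting low-rank product `A*B*ᵀ` as a function of the sign choice:
    (AB : (ℕ → ℝ) → Matrix (Fin n) (Fin m) ℝ)
    (hAB : ∀ w' : ℕ → ℝ, AB w' = U *
      (Matrix.of fun (i : Fin n) (j : Fin m) =>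
        if (i : ℕ) = (j : ℕ) ∧ (i : ℕ) < r then w' (i : ℕ) * max 0 (sv (i : ℕ) - lam)
        else 0) * Vᵀ) :
    frobSq (X - AB w)
        = ∑ i ∈ Finset.range r, (sv i - w i * (sv i - lam)) ^ 2
          + ∑ i ∈ Finset.Ico r p, (sv i) ^ 2 ∧
      ((∀ w' : ℕ → ℝ, (∀ i, i < r → w' i = 1 ∨ w' i = -1) →
          frobSq (X - AB w) ≤ frobSq (X - AB w')) ↔ ∀ i, i < r → w i = 1) := by
  have hsv_gt : ∀ i, i < r → lam < sv i := by
    intro i hi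
    have h1 : r - 1 < p := lt_of_lt_of_le (Nat.sub_lt hr one_pos) hrp
    have h2 : i ≤ r - 1 := Nat.le_sub_one_of_lt hi
    exact lt_of_lt_of_le hlam' (hs_mono i (r - 1) h2 h1)
  -- general cost formula
  have key : ∀ w' : ℕ → ℝ, frobSq (X - AB w')
      = ∑ i ∈ Finset.range r, (sv i - w' i * (sv i - lam)) ^ 2
        + ∑ i ∈ Finset.Ico r p, (sv i) ^ 2 := by
    intro w'
    set c : ℕ → ℝ := fun k => sv k - (if k < r then w' k * (sv k - lam) else 0) with hc
    set D : Matrix (Fin n) (Fin m) ℝ := Matrix.of fun (i : Fin n) (j : Fin m) =>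
      if (i : ℕ) = (j : ℕ) ∧ (i : ℕ) < r then w' (i : ℕ) * max 0 (sv (i : ℕ) - lam)
      else 0 with hD
    have hdiff : X - AB w' = U * (S - D) * Vᵀ := by
      rw [hX, hAB w', ← Matrix.sub_mul, ← Matrix.mul_sub]
    have hentry : ∀ (i : Fin n) (j : Fin m),
        (S - D) i j = if (i : ℕ) = (j : ℕ) then c (i : ℕ) else 0 := by
      intro i j
      simp only [Matrix.sub_apply, hS, hD, Matrix.of_apply, hc]
      by_cases hij : (i : ℕ) = (j : ℕ)
      · by_cases hir : (i : ℕ) < r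
        · have hjr : (j : ℕ) < r := hij ▸ hir
          have hmx : max 0 (sv (j : ℕ) - lam) = sv (j : ℕ) - lam :=
            max_eq_right (le_of_lt (sub_pos.mpr (hsv_gt _ hjr)))
          simp [hij, hjr, hmx]
        · have hjr : ¬ (j : ℕ) < r := hij ▸ hir
          simp [hij, hjr]
      · simp [hij]
    rw [hdiff, frobSq_conj _ _ _ hU hV]
    have step1 : frobSq (S - D)
        = ∑ k ∈ Finset.range n, ∑ l ∈ Finset.range m, (if k = l then c k else 0) ^ 2 := by
      unfold frobSq
      rw [← Fin.sum_univ_eq_sum_range]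
      refine Finset.sum_congr rfl fun i _ => ?_
      rw [← Fin.sum_univ_eq_sum_range]
      exact Finset.sum_congr rfl fun j _ => by rw [hentry i j]
    have step2 : ∀ k, ∑ l ∈ Finset.range m, (if k = l then c k else 0) ^ 2
        = if k ∈ Finset.range m then (c k) ^ 2 else 0 := by
      intro k
      rw [← Finset.sum_ite_eq (Finset.range m) k (fun l => (c k) ^ 2)]
      exact Finset.sum_congr rfl fun l _ => by split <;> simp
    have step3 : frobSq (S - D) = ∑ k ∈ Finset.range p, (c k) ^ 2 := by
      rw [step1]
      simp only [step2]
      rw [Finset.sum_ite_mem]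
      congr 1
      ext k
      simp only [Finset.mem_inter, Finset.mem_range]
      omega
    rw [step3, ← Finset.sum_range_add_sum_Ico _ hrp]
    congr 1
    · refine Finset.sum_congr rfl fun k hk => ?_
      rw [Finset.mem_range] at hk
      simp [hc, hk]
    · refine Finset.sum_congr rfl fun k hk => ?_
      rw [Finset.mem_Ico] at hk
      simp [hc, not_lt.mpr hk.1]
  refine ⟨key w, ?_, ?_⟩
  · -- minimality implies w = 1 on range r
    intro hmin i hi
    rcases hw i hi with h1 | h1
    · exact h1
    · exfalso
      set w'' : ℕ → ℝ := fun j => if j = i then 1 else w j with hw''def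
      have hw'' : ∀ j, j < r → w'' j = 1 ∨ w'' j = -1 := by
        intro j hj
        by_cases h : j = i
        · left; simp [hw''def, h]
        · simpa [hw''def, h] using hw j hj
      have hle := hmin w'' hw''
      rw [key w, key w''] at hle
      have hlt : ∑ j ∈ Finset.range r, (sv j - w'' j * (sv j - lam)) ^ 2
          < ∑ j ∈ Finset.range r, (sv j - w j * (sv j - lam)) ^ 2 := by
        refine Finset.sum_lt_sum (fun j hj => ?_) ⟨i, Finset.mem_range.mpr hi, ?_⟩
        · by_cases h : j = i
          · rw [Finset.mem_range] at hj
            have h2 : lam < sv j := hsv_gt j hj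
            have hw1 : w'' j = 1 := by simp [hw''def, h]
            have hwn : w j = -1 := h ▸ h1
            have e1 : sv j - w'' j * (sv j - lam) = lam := by rw [hw1]; ring
            have e2 : sv j - w j * (sv j - lam) = 2 * sv j - lam := by rw [hwn]; ring
            rw [e1, e2]
            have : lam < 2 * sv j - lam := by linarith
            exact le_of_lt (pow_lt_pow_left₀ this (le_of_lt hlam) two_ne_zero)
          · simp [hw''def, h]
        · have h2 : lam < sv i := hsv_gt i hi
          have hw1 : w'' i = 1 := by simp [hw''def]
          have e1 : sv i - w'' i * (sv i - lam) = lam := by rw [hw1]; ring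
          have e2 : sv i - w i * (sv i - lam) = 2 * sv i - lam := by rw [h1]; ring
          rw [e1, e2]
          have : lam < 2 * sv i - lam := by linarith
          exact pow_lt_pow_left₀ this (le_of_lt hlam) two_ne_zero
      linarith
  · -- w = 1 implies minimality
    intro hall w' hw'
    rw [key w, key w']
    have hsum : ∑ j ∈ Finset.range r, (sv j - w j * (sv j - lam)) ^ 2
        ≤ ∑ j ∈ Finset.range r, (sv j - w' j * (sv j - lam)) ^ 2 := by
      refine Finset.sum_le_sum fun j hj => ?_
      rw [Finset.mem_range] at hj
      have h2 : lam < sv j := hsv_gt j hj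
      have e1 : sv j - w j * (sv j - lam) = lam := by rw [hall j hj]; ring
      rw [e1]
      rcases hw' j hj with h | h
      · have e2 : sv j - w' j * (sv j - lam) = lam := by rw [h]; ring
        rw [e2]
      · have e2 : sv j - w' j * (sv j - lam) = 2 * sv j - lam := by rw [h]; ring
        rw [e2]
        exact pow_le_pow_left₀ (le_of_lt hlam) (by linarith) 2
    linarith
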